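/- arXiv:1902.03779 — 2 statements merged into one kernel-verified Lean document; each statement's English description precedes it below -/
import Mathlib

section
/- Let f : Finset V → ℝ be monotone submodular with f(∅) = 0, and let S_greedy be the set built by k steps of the greedy algorithm (each step adding an element maximizing the marginal gain). Then f(S_greedy) ≥ (1 − 1/e) · max over sets T of size k of f(T). -/
lemma greedy_sum_marginal {V : Type*} [DecidableEq V]
    (f : Finset V → ℝ)
    (hmono : ∀ S T : Finset V, S ⊆ T → f S ≤ f T)
    (hsub : ∀ S T : Finset V, S ⊆ T → ∀ x ∉ T,
      f (insert x T) - f T ≤ f (insert x S) - f S)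
    (S A : Finset V) :
    f (S ∪ A) - f S ≤ ∑ x ∈ A, (f (insert x S) - f S) := by
  induction A using Finset.induction_on with
  | empty => simp
  | @insert a A ha ih =>
    rw [Finset.sum_insert ha]
    have h1 : S ∪ insert a A = insert a (S ∪ A) := by
      ext y; simp [or_comm, or_assoc, or_left_comm]
    rw [h1]
    by_cases haS : a ∈ S ∪ A
    · rw [Finset.insert_eq_self.mpr haS]
      have h2 := hmono S (insert a S) (Finset.subset_insert _ _)
      linarith
    · have h2 := hsub S (S ∪ A) Finset.subset_union_left a haS
      linarith

/-- The classical Nemhauser–Wolsey–Fisher `(1 - 1/e)` guarantee for greedy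
maximization of a monotone submodular function. -/
theorem greedy_submodular_approx {V : Type*} [Fintype V] [DecidableEq V]
    (f : Finset V → ℝ)
    (hempty : f ∅ = 0)
    (hmono : ∀ S T : Finset V, S ⊆ T → f S ≤ f T)
    (hsub : ∀ S T : Finset V, S ⊆ T → ∀ x ∉ T,
      f (insert x T) - f T ≤ f (insert x S) - f S)
    (k : ℕ) (hk : k ≤ Fintype.card V)
    (g : ℕ → Finset V) (hg0 : g 0 = ∅)
    (hgreedy : ∀ i < k, ∃ x ∉ g i, g (i + 1) = insert x (g i) ∧
      ∀ y ∉ g i, f (insert y (g i)) - f (g i) ≤ f (insert x (g i)) - f (g i)) :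
    ∀ T : Finset V, T.card = k →
      f (g k) ≥ (1 - 1 / Real.exp 1) * f T := by
  intro T hT
  have hfT0 : 0 ≤ f T := by
    have := hmono ∅ T (Finset.empty_subset T); linarith [hempty]
  rcases Nat.eq_zero_or_pos k with hk0 | hkpos
  · subst hk0
    have hTe : T = ∅ := Finset.card_eq_zero.mp hT
    subst hTe
    simp [hg0, hempty]
  -- key per-step inequality
  have key : ∀ i < k, f T - f (g i) ≤ (k : ℝ) * (f (g (i+1)) - f (g i)) := by
    intro i hi
    obtain ⟨x, hx, hgi1, hmax⟩ := hgreedy i hi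
    have h1 : f T ≤ f (g i ∪ T) := hmono T _ Finset.subset_union_right
    have h2 := greedy_sum_marginal f hmono hsub (g i) T
    have h3 : ∑ y ∈ T, (f (insert y (g i)) - f (g i))
        ≤ ∑ _y ∈ T, (f (g (i+1)) - f (g i)) := by
      apply Finset.sum_le_sum
      intro y hy
      by_cases hyg : y ∈ g i
      · rw [Finset.insert_eq_self.mpr hyg]
        have hsub' : g i ⊆ g (i+1) := hgi1 ▸ Finset.subset_insert _ _
        have := hmono _ _ hsub'
        linarith
      · have := hmax y hyg
        rw [hgi1]; linarith
    rw [Finset.sum_const, hT, nsmul_eq_mul] at h3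
    linarith
  have hk1 : (1 : ℝ) ≤ (k : ℝ) := by exact_mod_cast hkpos
  have hkpos' : (0 : ℝ) < (k : ℝ) := by linarith
  have hratio0 : (0 : ℝ) ≤ 1 - 1 / (k : ℝ) := by
    rw [sub_nonneg, div_le_one hkpos']; exact hk1
  have ind : ∀ i ≤ k, f T - f (g i) ≤ (1 - 1 / (k : ℝ))^i * f T := by
    intro i
    induction i with
    | zero => intro _; simp [hg0, hempty]
    | succ n ih =>
      intro hn
      have hnk : n < k := hn
      have ih' := ih hnk.le
      have hkey := key n hnk
      have h4 : (f T - f (g n)) / (k : ℝ) ≤ f (g (n+1)) - f (g n) := by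
        rw [div_le_iff₀ hkpos']
        nlinarith [hkey]
      have heq : (1 - 1 / (k : ℝ)) * (f T - f (g n))
          = (f T - f (g n)) - (f T - f (g n)) / (k : ℝ) := by
        field_simp
      have step : f T - f (g (n+1)) ≤ (1 - 1 / (k : ℝ)) * (f T - f (g n)) := by
        rw [heq]; linarith
      have hchain : (1 - 1 / (k : ℝ)) * (f T - f (g n))
          ≤ (1 - 1 / (k : ℝ)) * ((1 - 1 / (k : ℝ))^n * f T) :=
        mul_le_mul_of_nonneg_left ih' hratio0
      rw [pow_succ]
      nlinarith [step, hchain]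
  have hexp : (1 - 1 / (k : ℝ))^k ≤ 1 / Real.exp 1 := by
    have h1 : (1 - 1 / (k : ℝ)) ≤ Real.exp (-(1 / (k : ℝ))) := by
      have := Real.add_one_le_exp (-(1 / (k : ℝ))); linarith
    have h2 : (1 - 1 / (k : ℝ))^k ≤ (Real.exp (-(1 / (k : ℝ))))^k :=
      pow_le_pow_left₀ hratio0 h1 k
    have h3 : (Real.exp (-(1 / (k : ℝ))))^k = Real.exp (-1) := by
      rw [← Real.exp_nat_mul]
      congr 1
      field_simp
    rw [h3, Real.exp_neg, ← one_div] at h2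
    exact h2
  have hfin := ind k le_rfl
  nlinarith [mul_le_mul_of_nonneg_right hexp hfT0]
end

section
/- Let f : Finset V → ℝ be monotone submodular with f(∅) = 0, S_greedy the greedy set of size k, and S* any set of size k. After one more greedy step from a current set S of size i, the residual gap satisfies f(S*) − f(S_{i+1}) ≤ (1 − 1/k)(f(S*) − f(S_i)), where S_{i+1} is obtained from S_i by adding the element of maximum marginal gain. -/
/-!
Let `g` be the marginal gain of the greedy element `x` at `S`. Adding the elements of `S*` to `S`
one at a time, submodularity bounds each increment by the marginal gain at `S` itself, which the
greedy choice bounds by `g`; with monotonicity this gives `f S* - f S ≤ k g`. Hence the greedy step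
gains at least `(f S* - f S) / k`.
-/

open Finset

section Submodular

variable {V β : Type*} [DecidableEq V]

def marginalGain [Sub β] (f : Finset V → β) (S : Finset V) (y : V) : β :=
  f (insert y S) - f S

def IsSubmodular [Sub β] [LE β] (f : Finset V → β) : Prop :=
  ∀ S T : Finset V, S ⊆ T → ∀ x ∉ T, marginalGain f T x ≤ marginalGain f S x

variable [AddCommGroup β] [PartialOrder β] [IsOrderedAddMonoid β] {f : Finset V → β}

theorem IsSubmodular.sub_le_sum_marginalGain (hf : IsSubmodular f) (S T : Finset V) :
    f (S ∪ T) - f S ≤ ∑ y ∈ T \ S, marginalGain f S y := by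
  induction T using Finset.induction_on with
  | empty => simp
  | @insert a T haT ih =>
    by_cases haS : a ∈ S
    · rwa [union_insert, insert_eq_of_mem (mem_union_left T haS),
        insert_sdiff_of_mem T haS]
    · have haST : a ∉ S ∪ T := by simp [haS, haT]
      have hgain := hf S (S ∪ T) subset_union_left a haST
      rw [union_insert, insert_sdiff_of_notMem T haS,
        sum_insert (fun h => haT (mem_sdiff.mp h).1)]
      unfold marginalGain at hgain ⊢
      calc f (insert a (S ∪ T)) - f S
          = (f (insert a (S ∪ T)) - f (S ∪ T)) + (f (S ∪ T) - f S) := by abel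
        _ ≤ _ := add_le_add hgain ih

theorem IsSubmodular.sub_le_card_nsmul_marginalGain (hf : IsSubmodular f) (hmono : Monotone f)
    {S : Finset V} {x : V} (hbest : ∀ y ∉ S, marginalGain f S y ≤ marginalGain f S x)
    (T : Finset V) : f T - f S ≤ #T • marginalGain f S x := by
  have hgain_nonneg : 0 ≤ marginalGain f S x :=
    sub_nonneg.mpr (hmono (subset_insert x S))
  calc f T - f S
      ≤ f (S ∪ T) - f S := sub_le_sub_right (hmono subset_union_right) _
    _ ≤ ∑ y ∈ T \ S, marginalGain f S y := hf.sub_le_sum_marginalGain S T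
    _ ≤ #(T \ S) • marginalGain f S x :=
        sum_le_card_nsmul _ _ _ fun y hy => hbest y (mem_sdiff.mp hy).2
    _ ≤ #T • marginalGain f S x :=
        nsmul_le_nsmul_left hgain_nonneg (card_le_card sdiff_subset)

end Submodular

theorem greedy_step_gap_general {V : Type*} [DecidableEq V]
    (f : Finset V → ℝ)
    (hmono : ∀ S T : Finset V, S ⊆ T → f S ≤ f T)
    (hsub : ∀ S T : Finset V, S ⊆ T → ∀ x ∉ T,
      f (insert x T) - f T ≤ f (insert x S) - f S)
    (k : ℕ)
    (Sstar : Finset V) (hcard : Sstar.card = k)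
    (S : Finset V) (x : V)
    (hbest : ∀ y ∉ S, f (insert y S) - f S ≤ f (insert x S) - f S) :
    f Sstar - f (insert x S) ≤ (1 - 1 / (k : ℝ)) * (f Sstar - f S) := by
  have hgap : f Sstar - f S ≤ k * marginalGain f S x := by
    simpa [hcard] using
      IsSubmodular.sub_le_card_nsmul_marginalGain hsub (fun _ _ h => hmono _ _ h) hbest Sstar
  have hgain : (f Sstar - f S) / k ≤ marginalGain f S x :=
    div_le_of_le_mul₀ k.cast_nonneg (sub_nonneg.mpr (hmono _ _ (subset_insert x S)))
      (by rwa [mul_comm])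
  unfold marginalGain at hgain
  rw [one_sub_mul, one_div_mul_eq_div]
  linarith

/-- Key per-step lemma for the `(1-1/e)` greedy guarantee: one greedy step
shrinks the residual gap by a factor `1 - 1/k`. -/
theorem greedy_step_gap {V : Type*} [Fintype V] [DecidableEq V]
    (f : Finset V → ℝ)
    (hempty : f ∅ = 0)
    (hmono : ∀ S T : Finset V, S ⊆ T → f S ≤ f T)
    (hsub : ∀ S T : Finset V, S ⊆ T → ∀ x ∉ T,
      f (insert x T) - f T ≤ f (insert x S) - f S)
    (k : ℕ) (hk : 0 < k)
    (Sstar : Finset V) (hcard : Sstar.card = k)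
    (hopt : ∀ T : Finset V, T.card = k → f T ≤ f Sstar)
    (S : Finset V) (x : V) (hx : x ∉ S)
    (hbest : ∀ y ∉ S, f (insert y S) - f S ≤ f (insert x S) - f S) :
    f Sstar - f (insert x S) ≤ (1 - 1 / (k : ℝ)) * (f Sstar - f S) :=
  greedy_step_gap_general f hmono hsub k Sstar hcard S x hbest
end
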